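/- If an observation table OT = (S, E, T) for a function L : X* → Y* is output-consistent, then it is consistent: if for every y ∈ Y the projected table 1_y OT is consistent, then for all s, s' ∈ S with T(s) = T(s') and all a ∈ X, one has T(sa) = T(s'a). -/
import Mathlib


/-- Extended transition function of a Mealy machine: `δ*(q, ε) = q`,
`δ*(q, a·w) = δ*(δ(q, a), w)`. -/
def deltaStar {Q X : Type*} (δ : Q → X → Q) : Q → List X → Q
  | q, [] => q
  | q, a :: w => deltaStar δ (δ q a) w

/-- Extended output function of a Mealy machine: `λ*(q, ε) = ε`,
`λ*(q, a·w) = λ(q, a) · λ*(δ(q, a), w)`. -/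
def lambdaStar {Q X Y : Type*} (δ : Q → X → Q) (lam : Q → X → Y) : Q → List X → List Y
  | _, [] => []
  | q, a :: w => lam q a :: lambdaStar δ lam (δ q a) w

/-- The indicator function `1_y : Y → {0, 1}`: `1_y(x) = 1` if `x = y`, else `0`. -/
def ind {Y : Type*} [DecidableEq Y] (y : Y) (x : Y) : Fin 2 := if x = y then 1 else 0

lemma map_ind_inj {Y : Type*} [DecidableEq Y] (l₁ l₂ : List Y)
    (h : ∀ y : Y, l₁.map (ind y) = l₂.map (ind y)) : l₁ = l₂ := by
  induction l₁ generalizing l₂ with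
  | nil =>
    cases l₂ with
    | nil => rfl
    | cons b t => exact absurd (h b) (by simp)
  | cons a t ih =>
    cases l₂ with
    | nil => exact absurd (h a) (by simp)
    | cons b t₂ =>
      have hab : a = b := by
        by_contra hne
        have := h a
        simp [ind, Ne.symm hne] at this
      have ht : t = t₂ := by
        apply ih
        intro y
        have := h y
        simp only [List.map_cons, List.cons.injEq] at this
        exact this.2
      rw [hab, ht]

/-- If an observation table `(S, E, T)` for `L : X* → Y*` is
output-consistent (each projected table `1_y OT` is consistent), then it is consistent. -/
theorem output_consistent_implies_consistent {X Y : Type*} [Finite X] [Finite Y]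
    [DecidableEq Y]
    (L : List X → List Y)
    (S E : Finset (List X))
    (hSpref : ∀ u v : List X, u ++ v ∈ S → u ∈ S)
    (hE : ∀ e ∈ E, e ≠ [])
    (T : List X → List X → List Y)
    (hT : ∀ s : List X, (s ∈ S ∨ ∃ s' ∈ S, ∃ a : X, s = s' ++ [a]) →
      ∀ e ∈ E, T s e = L (s ++ e))
    (houtcons : ∀ y : Y, ∀ s ∈ S, ∀ s' ∈ S,
      (∀ e ∈ E, (T s e).map (ind y) = (T s' e).map (ind y)) →
      ∀ a : X, ∀ e ∈ E, (T (s ++ [a]) e).map (ind y) = (T (s' ++ [a]) e).map (ind y)) :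
    ∀ s ∈ S, ∀ s' ∈ S, (∀ e ∈ E, T s e = T s' e) →
      ∀ a : X, ∀ e ∈ E, T (s ++ [a]) e = T (s' ++ [a]) e := by
  intro s hs s' hs' heq a e he
  apply map_ind_inj
  intro y
  exact houtcons y s hs s' hs' (fun e' he' => by rw [heq e' he']) a e he
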